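/- Assume a + b < c. Then for all positive integers i, j satisfying a·i ≤ (b−a)·j and (b−a)·j ≤ (c−b)·i, both monomials z_1^i·z_3^j and z_2^j·z_4^i belong to J; moreover such a pair (i,j) of positive integers exists. -/

import Mathlib

/-!
Both monomials are homogeneous of degree `g = i + j`, so they lie in `J` iff their images lie in
`m I^g`. The image `x^(ci+aj) y^(bj)` of `z₁^i z₃^j` factors as `x^p y^q (x^b y^a)^g` with
`p = (c-b)i - (b-a)j` and `q = (b-a)j - ai`, both nonnegative by the hypotheses on `(i, j)`, and
`p + q = (c-a-b)i > 0`, so `x^p y^q ∈ m`. The image of `z₂^j z₄^i` is the mirror image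
`x^q y^p (x^a y^b)^g`. The pair `(i, j) = (b - a, a)` satisfies the inequalities since `a ≤ c - b`.
-/

open MvPolynomial

theorem Ideal.pow_mul_pow_mem_span_pair {R : Type*} [CommSemiring R] (x y : R) {p q : ℕ}
    (hpq : 0 < p + q) : x ^ p * y ^ q ∈ Ideal.span {x, y} := by
  rcases Nat.eq_zero_or_pos p with rfl | hp
  · exact Ideal.mul_mem_left _ _ <|
      Ideal.pow_mem_of_mem _ (Ideal.subset_span (by simp)) q (by omega)
  · exact Ideal.mul_mem_right _ _ <| Ideal.pow_mem_of_mem _ (Ideal.subset_span (by simp)) p hp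

theorem Ideal.pow_mul_pow_mem_span_pair_mul_pow {R : Type*} [CommSemiring R] {x y : R}
    {I : Ideal R} {α β g e f : ℕ} (hI : x ^ α * y ^ β ∈ I) (he : α * g ≤ e) (hf : β * g ≤ f)
    (hlt : α * g + β * g < e + f) : x ^ e * y ^ f ∈ Ideal.span {x, y} * I ^ g := by
  obtain ⟨p, rfl⟩ := Nat.exists_eq_add_of_le he
  obtain ⟨q, rfl⟩ := Nat.exists_eq_add_of_le hf
  have hfactor : x ^ (α * g + p) * y ^ (β * g + q) = x ^ p * y ^ q * (x ^ α * y ^ β) ^ g := by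
    ring
  rw [hfactor]
  exact Ideal.mul_mem_mul (Ideal.pow_mul_pow_mem_span_pair x y (by omega)) (Ideal.pow_mem_pow hI g)

theorem MvPolynomial.aeval_homogeneousComponent_mem {σ R S : Type*} [CommSemiring R]
    [CommSemiring S] [Algebra R S] (u : σ → S) (N : ℕ → Ideal S) {f : MvPolynomial σ R} {n : ℕ}
    (hf : f.IsHomogeneous n) (h : aeval u f ∈ N n) (d : ℕ) :
    aeval u (homogeneousComponent d f) ∈ N d := by
  rw [homogeneousComponent_of_mem ((mem_homogeneousSubmodule _ _).mpr hf)]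
  split_ifs with hd
  · exact hd ▸ h
  · simp

theorem exponent_bounds {a b c i j : ℕ} (hab : a ≤ b) (habc : a + b < c) (hi : 0 < i)
    (h₁ : a * i ≤ (b - a) * j) (h₂ : (b - a) * j ≤ (c - b) * i) :
    a * (i + j) ≤ b * j ∧ b * (i + j) ≤ c * i + a * j ∧
      a * (i + j) + b * (i + j) < b * j + (c * i + a * j) := by
  zify [hab, show b ≤ c by omega] at *
  refine ⟨by linarith, by linarith, by nlinarith⟩

theorem stmt_13_general {K : Type*} [Field K] (a b c : ℕ)
    (ha : 0 < a) (hab : a < b)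
    (u : Fin 4 → MvPolynomial (Fin 2) K)
    (hu0 : u 0 = X 0 ^ c) (hu1 : u 1 = X 0 ^ b * X 1 ^ a)
    (hu2 : u 2 = X 0 ^ a * X 1 ^ b) (hu3 : u 3 = X 1 ^ c)
    (I mm : Ideal (MvPolynomial (Fin 2) K))
    (hI : I = Ideal.span {u 0, u 1, u 2, u 3})
    (hmm : mm = Ideal.span {(X 0 : MvPolynomial (Fin 2) K), X 1})
    (J : Ideal (MvPolynomial (Fin 4) K))
    (hJ : ∀ f : MvPolynomial (Fin 4) K,
      f ∈ J ↔ ∀ d : ℕ, aeval u (homogeneousComponent d f) ∈ mm * I ^ d)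
    (habc : a + b < c) :
    (∀ i j : ℕ, 0 < i → 0 < j → a * i ≤ (b - a) * j → (b - a) * j ≤ (c - b) * i →
      (X 0 : MvPolynomial (Fin 4) K) ^ i * X 2 ^ j ∈ J ∧
      (X 1 : MvPolynomial (Fin 4) K) ^ j * X 3 ^ i ∈ J) ∧
    (∃ i j : ℕ, 0 < i ∧ 0 < j ∧ a * i ≤ (b - a) * j ∧ (b - a) * j ≤ (c - b) * i) := by
  have hu1I : X 0 ^ b * X 1 ^ a ∈ I := hu1 ▸ hI ▸ Ideal.subset_span (by simp)
  have hu2I : X 0 ^ a * X 1 ^ b ∈ I := hu2 ▸ hI ▸ Ideal.subset_span (by simp)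
  refine ⟨fun i j hi _ h₁ h₂ => ?_, ⟨b - a, a, by omega, ha, (mul_comm a _).le,
    (Nat.mul_le_mul_left _ (by omega)).trans_eq (mul_comm _ _)⟩⟩
  obtain ⟨hle₁, hle₂, hlt⟩ := exponent_bounds hab.le habc hi h₁ h₂
  constructor
  · rw [hJ]
    refine aeval_homogeneousComponent_mem u _
      ((isHomogeneous_X_pow 0 i).mul (isHomogeneous_X_pow 2 j)) ?_
    have himage : aeval u (X 0 ^ i * X 2 ^ j : MvPolynomial (Fin 4) K)
        = X 0 ^ (c * i + a * j) * X 1 ^ (b * j) := by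
      simp only [map_mul, map_pow, aeval_X, hu0, hu2]; ring
    rw [himage, hmm]
    exact Ideal.pow_mul_pow_mem_span_pair_mul_pow hu1I hle₂ hle₁ (by linarith)
  · rw [hJ]
    refine aeval_homogeneousComponent_mem u _
      ((isHomogeneous_X_pow 1 j).mul (isHomogeneous_X_pow 3 i)) ?_
    have himage : aeval u (X 1 ^ j * X 3 ^ i : MvPolynomial (Fin 4) K)
        = X 0 ^ (b * j) * X 1 ^ (c * i + a * j) := by
      simp only [map_mul, map_pow, aeval_X, hu1, hu3]; ring
    rw [himage, hmm, add_comm j i]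
    exact Ideal.pow_mul_pow_mem_span_pair_mul_pow hu2I hle₁ hle₂ (by linarith)

theorem stmt_13 {K : Type*} [Field K] (a b c : ℕ)
    (ha : 0 < a) (hab : a < b) (hbc : b < c)
    (hgcd : Nat.gcd a (Nat.gcd b c) = 1)
    (u : Fin 4 → MvPolynomial (Fin 2) K)
    (hu0 : u 0 = X 0 ^ c) (hu1 : u 1 = X 0 ^ b * X 1 ^ a)
    (hu2 : u 2 = X 0 ^ a * X 1 ^ b) (hu3 : u 3 = X 1 ^ c)
    (I mm : Ideal (MvPolynomial (Fin 2) K))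
    (hI : I = Ideal.span {u 0, u 1, u 2, u 3})
    (hmm : mm = Ideal.span {(X 0 : MvPolynomial (Fin 2) K), X 1})
    (J : Ideal (MvPolynomial (Fin 4) K))
    (hJ : ∀ f : MvPolynomial (Fin 4) K,
      f ∈ J ↔ ∀ d : ℕ, aeval u (homogeneousComponent d f) ∈ mm * I ^ d)
    (habc : a + b < c) :
    (∀ i j : ℕ, 0 < i → 0 < j → a * i ≤ (b - a) * j → (b - a) * j ≤ (c - b) * i →
      (X 0 : MvPolynomial (Fin 4) K) ^ i * X 2 ^ j ∈ J ∧
      (X 1 : MvPolynomial (Fin 4) K) ^ j * X 3 ^ i ∈ J) ∧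
    (∃ i j : ℕ, 0 < i ∧ 0 < j ∧ a * i ≤ (b - a) * j ∧ (b - a) * j ≤ (c - b) * i) :=
  stmt_13_general a b c ha hab u hu0 hu1 hu2 hu3 I mm hI hmm J hJ habc
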